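/- arXiv:2208.02770 — 4 statements merged into one kernel-verified Lean document; each statement's English description precedes it below -/
import Mathlib

section
/- (Mehler–Heine asymptotics) For every z ∈ ℝ, lim_{N→∞} P̃_N(cos(z/N)) = J₀(z). -/
open Real Filter MeasureTheory intervalIntegral

/-- The Legendre polynomial `P̃_N(x) = (1/(2^N N!)) · d^N/dx^N[(x²−1)^N]`. -/
noncomputable def legendreP (N : ℕ) (x : ℝ) : ℝ :=
  (1 / (2 ^ N * (Nat.factorial N : ℝ))) * iteratedDeriv N (fun y : ℝ => (y ^ 2 - 1) ^ N) x

/-- The normalized Legendre (Ferrers) function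
`P^m_N(x) = ((N+1/2)·(N−m)!/(N+m)!)^{1/2} · (1/(2^N N!)) · (1−x²)^{m/2} ·
  d^{N+m}/dx^{N+m}[(x²−1)^N]`. -/
noncomputable def ferrersP (m N : ℕ) (x : ℝ) : ℝ :=
  Real.sqrt ((((N : ℝ) + 1 / 2) * (Nat.factorial (N - m) : ℝ)) / (Nat.factorial (N + m) : ℝ)) *
    (1 / (2 ^ N * (Nat.factorial N : ℝ))) * (1 - x ^ 2) ^ ((m : ℝ) / 2) *
    iteratedDeriv (N + m) (fun y : ℝ => (y ^ 2 - 1) ^ N) x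

/-- The Bessel function of order zero, `J₀(z) = (1/(2π)) ∫_{−π}^{π} exp(−i z sin θ) dθ`. -/
noncomputable def besselJ₀ (z : ℝ) : ℂ :=
  (1 / (2 * (π : ℂ))) * ∫ θ in (-π)..π, Complex.exp (-Complex.I * z * Real.sin θ)

/-- The Airy function, `Ai(x) = lim_{R→∞} (1/π) ∫_0^R cos(t³/3 + x·t) dt`. -/
noncomputable def airyAi (x : ℝ) : ℝ :=
  limUnder Filter.atTop
    (fun R : ℝ => (1 / π) * ∫ t in (0 : ℝ)..R, Real.cos (t ^ 3 / 3 + x * t))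

/-!
Rodrigues' formula for `legendreP`, after the substitution `t = (1 - x) / 2`, is Mathlib's
Rodrigues formula for `Polynomial.shiftedLegendre`, whose coefficients give
`P̃_N(x) = ∑ₖ C(N, k) C(N + k, k) ((x - 1) / 2)ᵏ`. At `x = cos (z / N)` we have
`(x - 1) / 2 ~ -z² / (4 N²)` and `C(N, k) C(N + k, k) ~ N²ᵏ / k!²`, so the `k`-th term tends to
`(-z² / 4)ᵏ / k!²`, with the summable bound `(z² / 2)ᵏ / k!²`; Tannery's theorem lets us pass to
the limit under the sum. On the other side, expanding the exponential in the integral defining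
`J₀` and using `∫_{-π}^{π} sin²ᵐ = 2π (2m)! / (4ᵐ m!²)` (odd moments vanish) yields the same
series `J₀(z) = ∑ₘ (-z² / 4)ᵐ / m!²`.
-/

open scoped Nat Topology

section Rodrigues

open Polynomial

lemma Polynomial.iteratedDeriv_aeval {R 𝕜 : Type*} [CommSemiring R] [NontriviallyNormedField 𝕜]
    [Algebra R 𝕜] (q : R[X]) (n : ℕ) :
    iteratedDeriv n (fun x : 𝕜 => aeval x q) = fun x => aeval x (derivative^[n] q) := by
  induction n with
  | zero => simp
  | succ n ih =>
    ext x
    rw [iteratedDeriv_succ, ih, Function.iterate_succ_apply', Polynomial.deriv_aeval]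

lemma legendreP_eq_aeval_shiftedLegendre (N : ℕ) (x : ℝ) :
    legendreP N x = aeval ((1 - x) / 2) (shiftedLegendre N) := by
  set P : ℤ[X] := X ^ N * (1 - X) ^ N
  have hsubst : (fun y : ℝ => (y ^ 2 - 1) ^ N) =
      fun y => (-4) ^ N * (fun t => aeval (1 / 2 + t) P) (-(1 / 2) * y) := by
    ext y
    simp only [P, map_mul, map_pow, map_sub, map_one, aeval_X, ← mul_pow]
    ring
  have hP : ContDiff ℝ N fun t : ℝ => aeval (1 / 2 + t) P :=
    (contDiff_aeval P N).comp (contDiff_const.add contDiff_id)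
  rw [legendreP, hsubst, iteratedDeriv_const_mul_field, iteratedDeriv_comp_const_mul hP]
  dsimp only
  rw [iteratedDeriv_comp_const_add N (fun u : ℝ => aeval u P), Polynomial.iteratedDeriv_aeval,
    ← factorial_mul_shiftedLegendre_eq]
  beta_reduce
  rw [show (1 : ℝ) / 2 + -(1 / 2) * x = (1 - x) / 2 by ring]
  simp only [map_mul, map_natCast, ← mul_assoc, ← mul_pow]
  field_simp
  norm_num

lemma legendreP_eq_sum (N : ℕ) (x : ℝ) :
    legendreP N x =
      ∑ k ∈ Finset.range (N + 1), (N.choose k * (N + k).choose k : ℝ) * ((x - 1) / 2) ^ k := by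
  rw [legendreP_eq_aeval_shiftedLegendre, shiftedLegendre, map_sum]
  refine Finset.sum_congr rfl fun k _ => ?_
  rw [Nat.choose_symm_add]
  simp only [map_mul, map_pow, map_neg, map_one, map_natCast, aeval_X]
  rw [show (x - 1) / 2 = -1 * ((1 - x) / 2) by ring, mul_pow]
  ring

end Rodrigues

lemma abs_cos_sub_one_le (t : ℝ) : |cos t - 1| ≤ t ^ 2 / 2 := by
  rw [abs_of_nonpos (by linarith [cos_le_one t])]
  linarith [one_sub_sq_div_two_le_cos (x := t)]

lemma tendsto_choose_add_div_pow (a k : ℕ) :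
    Tendsto (fun N : ℕ => ((N + a).choose k : ℝ) / (N : ℝ) ^ k) atTop (𝓝 (1 / k !)) := by
  have hfactor (j : ℕ) : Tendsto (fun N : ℕ => ((N : ℝ) + a - j) / N) atTop (𝓝 1) := by
    have h := tendsto_const_nhds (x := (1 : ℝ)).add
      (tendsto_const_div_atTop_nhds_zero_nat ((a : ℝ) - j))
    rw [add_zero] at h
    refine h.congr' ?_
    filter_upwards [eventually_ne_atTop 0] with N hN
    field_simp
    ring
  have h := (tendsto_finsetProd (Finset.range k) fun j _ => hfactor j).div_const (k ! : ℝ)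
  rw [Finset.prod_const_one] at h
  refine h.congr fun N => ?_
  rw [Nat.cast_choose_eq_descPochhammer_div, descPochhammer_eval_eq_prod_range,
    Finset.prod_div_distrib, Finset.prod_const, Finset.card_range]
  push_cast
  ring

lemma tendsto_sq_mul_cos_div_sub_one (z : ℝ) :
    Tendsto (fun N : ℕ => (N : ℝ) ^ 2 * (cos (z / N) - 1)) atTop (𝓝 (-(z ^ 2) / 2)) := by
  have hsinc : Tendsto (fun N : ℕ => sinc (z / 2 / N)) atTop (𝓝 1) := by
    have h := (continuous_sinc.tendsto 0).comp (tendsto_const_div_atTop_nhds_zero_nat (z / 2))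
    rwa [sinc_zero] at h
  have h := (hsinc.pow 2).const_mul (-(z ^ 2) / 2)
  rw [one_pow, mul_one] at h
  refine h.congr' ?_
  filter_upwards [eventually_ne_atTop 0] with N hN
  have hzN : z / N = 2 * (z / 2 / N) := by ring
  by_cases hz : z = 0
  · simp [hz]
  rw [hzN, cos_two_mul, cos_sq', sinc_of_ne_zero (by positivity)]
  field_simp
  ring

lemma tendsto_legendre_term (z : ℝ) (k : ℕ) :
    Tendsto (fun N : ℕ => (N.choose k * (N + k).choose k : ℝ) * ((cos (z / N) - 1) / 2) ^ k)
      atTop (𝓝 ((-(z ^ 2) / 4) ^ k / (k ! : ℝ) ^ 2)) := by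
  have h := ((tendsto_choose_add_div_pow 0 k).mul (tendsto_choose_add_div_pow k k)).mul
    (((tendsto_sq_mul_cos_div_sub_one z).div_const 2).pow k)
  rw [show (-(z ^ 2) / 4) ^ k / (k ! : ℝ) ^ 2 = 1 / k ! * (1 / k !) * (-(z ^ 2) / 2 / 2) ^ k by
    ring]
  refine h.congr' ?_
  filter_upwards [eventually_ne_atTop 0] with N hN
  simp only [add_zero]
  rw [mul_div_assoc, mul_pow, pow_right_comm, sq]
  field_simp

lemma abs_legendre_term_le (z : ℝ) {N : ℕ} (hN : N ≠ 0) (k : ℕ) :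
    |(N.choose k * (N + k).choose k : ℝ) * ((cos (z / N) - 1) / 2) ^ k| ≤
      (z ^ 2 / 2) ^ k / (k ! : ℝ) ^ 2 := by
  rcases lt_or_ge N k with hNk | hkN
  · simp only [Nat.choose_eq_zero_of_lt hNk, Nat.cast_zero, zero_mul, abs_zero]
    positivity
  have hchoose : (N.choose k : ℝ) ≤ N ^ k / k ! := Nat.choose_le_pow_div k N
  have hchoose_add : ((N + k).choose k : ℝ) ≤ (2 * N) ^ k / k ! := by
    refine (Nat.choose_le_pow_div k (N + k)).trans ?_
    gcongr
    push_cast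
    linarith [(Nat.cast_le (α := ℝ)).mpr hkN]
  have hcos : |(cos (z / N) - 1) / 2| ≤ z ^ 2 / (4 * N ^ 2) := by
    calc |(cos (z / N) - 1) / 2| = |cos (z / N) - 1| / 2 := by rw [abs_div, abs_two]
      _ ≤ (z / N) ^ 2 / 2 / 2 := by gcongr; exact abs_cos_sub_one_le _
      _ = z ^ 2 / (4 * N ^ 2) := by ring
  calc |(N.choose k * (N + k).choose k : ℝ) * ((cos (z / N) - 1) / 2) ^ k|
      = N.choose k * (N + k).choose k * |(cos (z / N) - 1) / 2| ^ k := by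
        rw [abs_mul, abs_pow, abs_of_nonneg (by positivity)]
    _ ≤ N ^ k / k ! * ((2 * N) ^ k / k !) * (z ^ 2 / (4 * N ^ 2)) ^ k := by gcongr
    _ = (N * (2 * N) * (z ^ 2 / (4 * N ^ 2))) ^ k / (k ! : ℝ) ^ 2 := by
        rw [mul_pow, mul_pow]
        ring
    _ = (z ^ 2 / 2) ^ k / (k ! : ℝ) ^ 2 := by
        field_simp
        ring

lemma summable_pow_div_factorial_sq (x : ℝ) : Summable fun k : ℕ => x ^ k / (k ! : ℝ) ^ 2 := by
  refine (Real.summable_pow_div_factorial |x|).of_norm_bounded fun k => ?_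
  rw [Real.norm_eq_abs, abs_div, abs_pow, abs_of_nonneg (by positivity : (0 : ℝ) ≤ (k ! : ℝ) ^ 2)]
  gcongr
  exact_mod_cast Nat.le_self_pow two_ne_zero k !

lemma tendsto_legendreP_cos_div (z : ℝ) :
    Tendsto (fun N : ℕ => legendreP N (cos (z / N))) atTop
      (𝓝 (∑' k : ℕ, (-(z ^ 2) / 4) ^ k / (k ! : ℝ) ^ 2)) := by
  have hbound : ∀ᶠ N : ℕ in atTop, ∀ k,
      ‖(N.choose k * (N + k).choose k : ℝ) * ((cos (z / N) - 1) / 2) ^ k‖ ≤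
        (z ^ 2 / 2) ^ k / (k ! : ℝ) ^ 2 := by
    filter_upwards [eventually_ne_atTop 0] with N hN k using abs_legendre_term_le z hN k
  refine (tendsto_tsum_of_dominated_convergence (summable_pow_div_factorial_sq _)
    (tendsto_legendre_term z) hbound).congr fun N => ?_
  rw [legendreP_eq_sum, tsum_eq_sum fun k hk => ?_]
  rw [Finset.mem_range, not_lt] at hk
  simp [Nat.choose_eq_zero_of_lt (Nat.lt_of_succ_le hk)]

lemma integral_sin_pow_add_two_neg_pi_pi (n : ℕ) :
    ∫ θ in -π..π, sin θ ^ (n + 2) = (n + 1) / (n + 2) * ∫ θ in -π..π, sin θ ^ n := by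
  simp [integral_sin_pow]

lemma integral_sin_pow_two_mul_neg_pi_pi (m : ℕ) :
    ∫ θ in -π..π, sin θ ^ (2 * m) = 2 * π * (2 * m)! / (4 ^ m * (m ! : ℝ) ^ 2) := by
  induction m with
  | zero => simp; ring
  | succ m ih =>
    rw [mul_add_one, integral_sin_pow_add_two_neg_pi_pi, ih, Nat.factorial_succ (2 * m + 1),
      Nat.factorial_succ (2 * m), Nat.factorial_succ m]
    push_cast
    field_simp
    ring

lemma integral_sin_pow_two_mul_add_one_neg_pi_pi (m : ℕ) :
    ∫ θ in -π..π, sin θ ^ (2 * m + 1) = 0 := by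
  induction m with
  | zero => simp
  | succ m ih => rw [mul_add_one, add_right_comm, integral_sin_pow_add_two_neg_pi_pi, ih, mul_zero]

lemma hasSum_intervalIntegral_cexp_mul {f : ℝ → ℝ} (hf : Continuous f) {M : ℝ}
    (hM : ∀ x, |f x| ≤ M) (c : ℂ) (a b : ℝ) :
    HasSum (fun n : ℕ => c ^ n / n ! * ∫ x in a..b, f x ^ n)
      (∫ x in a..b, Complex.exp (c * f x)) := by
  have hterm (n : ℕ) : ∫ x in a..b, (n ! : ℂ)⁻¹ • (c * f x) ^ n =
      c ^ n / n ! * ∫ x in a..b, f x ^ n := by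
    simp only [smul_eq_mul, mul_pow, intervalIntegral.integral_const_mul, ← Complex.ofReal_pow,
      intervalIntegral.integral_ofReal]
    ring
  simp only [← hterm]
  refine intervalIntegral.hasSum_integral_of_dominated_convergence
    (fun n _ => (‖c‖ * M) ^ n / n !) (fun n => ?_) (fun n => ?_) ?_ ?_ ?_
  · fun_prop
  · refine ae_of_all _ fun x _ => ?_
    have hfx : ‖(f x : ℂ)‖ ≤ M := by simpa using hM x
    simp only [norm_smul, norm_inv, Complex.norm_natCast, norm_pow, norm_mul]
    rw [inv_mul_eq_div]
    gcongr
  · exact ae_of_all _ fun _ _ => Real.summable_pow_div_factorial _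
  · exact intervalIntegrable_const
  · refine ae_of_all _ fun x _ => ?_
    rw [Complex.exp_eq_exp_ℂ]
    exact NormedSpace.exp_series_hasSum_exp' _

lemma hasSum_besselJ₀ (z : ℝ) :
    HasSum (fun k : ℕ => (((-(z ^ 2) / 4) ^ k / (k ! : ℝ) ^ 2 : ℝ) : ℂ)) (besselJ₀ z) := by
  set term : ℕ → ℂ := fun n => (-Complex.I * z) ^ n / n ! * ∫ θ in -π..π, sin θ ^ n
  have hsum : HasSum term (∫ θ in -π..π, Complex.exp (-Complex.I * z * sin θ)) :=
    hasSum_intervalIntegral_cexp_mul continuous_sin abs_sin_le_one _ _ _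
  have hodd : ∀ n ∉ Set.range (2 * ·), term n = 0 := by
    rintro n hn
    obtain ⟨m, rfl⟩ : Odd n := Nat.not_even_iff_odd.mp fun ⟨m, hm⟩ => hn ⟨m, by dsimp only; omega⟩
    simp [term, integral_sin_pow_two_mul_add_one_neg_pi_pi]
  have heven (m : ℕ) : term (2 * m) =
      2 * π * (((-(z ^ 2) / 4) ^ m / (m ! : ℝ) ^ 2 : ℝ) : ℂ) := by
    simp only [term, integral_sin_pow_two_mul_neg_pi_pi]
    have hfac := (2 * m).factorial_ne_zero
    simp only [pow_mul, mul_pow, neg_sq, Complex.I_sq, div_pow]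
    push_cast
    field_simp
    ring
  rw [← (mul_right_injective₀ (two_ne_zero' ℕ)).hasSum_iff hodd] at hsum
  have hcoef : (fun k : ℕ => (((-(z ^ 2) / 4) ^ k / (k ! : ℝ) ^ 2 : ℝ) : ℂ)) =
      fun m => 1 / (2 * π) * term (2 * m) := by
    ext m
    rw [heven]
    field_simp
  rw [besselJ₀, hcoef]
  exact hsum.mul_left _

/-- Mehler–Heine asymptotics for Legendre polynomials. -/
theorem mehler_heine (z : ℝ) :
    Tendsto (fun N : ℕ => ((legendreP N (Real.cos (z / (N : ℝ))) : ℝ) : ℂ))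
      atTop (nhds (besselJ₀ z)) := by
  rw [← (hasSum_besselJ₀ z).tsum_eq, ← Complex.ofReal_tsum]
  exact (Complex.continuous_ofReal.tendsto _).comp (tendsto_legendreP_cos_div z)
end

section
/- For all integers 0 ≤ m ≤ N and all x ∈ (−1,1), the normalized Legendre function satisfies the associated Legendre differential equation (1−x²)·(P^m_N)''(x) − 2x·(P^m_N)'(x) + ((N+1/2)² − 1/4 − m²/(1−x²))·P^m_N(x) = 0. -/
open Real Filter MeasureTheory intervalIntegral

/-!
Put `u = (x² - 1)^N`. Differentiating `(x² - 1) u' = 2N x u` a further `N + m` times shows that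
`q = u^{(N+m)}` satisfies `(1 - x²) q'' - 2(m + 1) x q' + (N - m)(N + m + 1) q = 0`. The
substitution `f = (1 - x²)^{m/2} q` turns this into the associated Legendre equation with
eigenvalue `N(N + 1) = (N + 1/2)² - 1/4`, and the normalizing constant is harmless since the
equation is linear.
-/

open Polynomial Topology

theorem iteratedDeriv_polynomial_eval (p : ℝ[X]) (n : ℕ) :
    iteratedDeriv n (fun y => p.eval y) = fun y => (derivative^[n] p).eval y := by
  induction n with
  | zero => simp
  | succ k ih =>
    rw [iteratedDeriv_succ, ih, Function.iterate_succ_apply']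
    funext y
    exact Polynomial.deriv _

theorem X_sq_sub_one_mul_derivative_pow (N : ℕ) :
    ((X : ℝ[X]) ^ 2 - 1) * derivative ((X ^ 2 - 1) ^ N)
      = C (2 * (N : ℝ)) * X * (X ^ 2 - 1) ^ N := by
  rcases N with _ | n
  · simp
  · simp only [derivative_pow, derivative_sub, derivative_X, derivative_one, Nat.add_sub_cancel]
    push_cast
    rw [C_mul, pow_succ _ n]
    ring

theorem X_sq_sub_one_mul_iterate_derivative_pow (N k : ℕ) :
    ((X : ℝ[X]) ^ 2 - 1) * derivative (derivative (derivative^[k] ((X ^ 2 - 1) ^ N)))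
      = C (2 * (N : ℝ) - 2 * ((k : ℝ) + 1)) * X * derivative (derivative^[k] ((X ^ 2 - 1) ^ N))
        + C (((k : ℝ) + 1) * (2 * (N : ℝ) - k)) * derivative^[k] ((X ^ 2 - 1) ^ N) := by
  induction k with
  | zero =>
    have h := congrArg derivative (X_sq_sub_one_mul_derivative_pow N)
    simp only [derivative_mul, derivative_C, derivative_X, derivative_sub, derivative_X_sq,
      derivative_one] at h
    simp only [Function.iterate_zero_apply, Nat.cast_zero, map_sub, map_mul, map_add, map_ofNat,
      map_zero, map_one, C_eq_natCast] at h ⊢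
    linear_combination h
  | succ k ih =>
    have h := congrArg derivative ih
    simp only [derivative_add, derivative_mul, derivative_C, derivative_X, derivative_sub,
      derivative_X_sq, derivative_one] at h
    simp only [Function.iterate_succ_apply']
    push_cast
    simp only [map_sub, map_mul, map_add, map_one, map_ofNat, C_eq_natCast] at h ⊢
    linear_combination h

theorem HasDerivAt.one_sub_sq_rpow_mul {g : ℝ → ℝ} {g' y : ℝ} (a : ℝ) (hg : HasDerivAt g g' y)
    (hy : y ^ 2 < 1) :
    HasDerivAt (fun z => (1 - z ^ 2) ^ a * g z)
      ((1 - y ^ 2) ^ a * (g' - 2 * a * y * g y / (1 - y ^ 2))) y := by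
  have hw : 1 - y ^ 2 ≠ 0 := by linarith
  have hsq : HasDerivAt (fun z => 1 - z ^ 2) (-(2 * y)) y := by
    simpa using (hasDerivAt_pow 2 y).const_sub 1
  refine ((hsq.rpow_const (p := a) (Or.inl hw)).mul hg).congr_deriv ?_
  rw [rpow_sub_one hw]
  field_simp
  ring

theorem associated_legendre_ode_of_one_sub_sq_rpow_mul {g g' : ℝ → ℝ} {g'' m l x : ℝ}
    (hg : ∀ᶠ y in 𝓝 x, HasDerivAt g (g' y) y) (hg' : HasDerivAt g' g'' x) (hx : x ^ 2 < 1)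
    (hode : (1 - x ^ 2) * g'' - 2 * (m + 1) * x * g' x + (l - m * (m + 1)) * g x = 0) :
    (1 - x ^ 2) * deriv (deriv fun y => (1 - y ^ 2) ^ (m / 2) * g y) x
      - 2 * x * deriv (fun y => (1 - y ^ 2) ^ (m / 2) * g y) x
      + (l - m ^ 2 / (1 - x ^ 2)) * ((1 - x ^ 2) ^ (m / 2) * g x) = 0 := by
  have hw : 1 - x ^ 2 ≠ 0 := by linarith
  set h : ℝ → ℝ := fun y => g' y - 2 * (m / 2) * y * g y / (1 - y ^ 2) with h_def
  have hnear : ∀ᶠ y in 𝓝 x, y ^ 2 < 1 :=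
    (continuous_pow 2).continuousAt.eventually (gt_mem_nhds hx)
  have hderiv : deriv (fun y => (1 - y ^ 2) ^ (m / 2) * g y) =ᶠ[𝓝 x]
      fun y => (1 - y ^ 2) ^ (m / 2) * h y := by
    filter_upwards [hg, hnear] with y hgy hy
    exact (hgy.one_sub_sq_rpow_mul _ hy).deriv
  have hh : HasDerivAt h
      (g'' - m * ((g x + x * g' x) * (1 - x ^ 2) + 2 * x ^ 2 * g x) / (1 - x ^ 2) ^ 2) x := by
    have hsq : HasDerivAt (fun z => 1 - z ^ 2) (-(2 * x)) x := by
      simpa using (hasDerivAt_pow 2 x).const_sub 1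
    have hnum := ((hasDerivAt_id x).const_mul (2 * (m / 2))).mul hg.self_of_nhds
    refine (hg'.sub (hnum.div hsq hw)).congr_deriv ?_
    simp only [Pi.mul_apply, id]
    field_simp
    ring
  rw [hderiv.deriv_eq, (hh.one_sub_sq_rpow_mul _ hx).deriv,
    (hg.self_of_nhds.one_sub_sq_rpow_mul _ hx).deriv]
  have key : (1 - x ^ 2) *
        (g'' - m * ((g x + x * g' x) * (1 - x ^ 2) + 2 * x ^ 2 * g x) / (1 - x ^ 2) ^ 2
          - 2 * (m / 2) * x * h x / (1 - x ^ 2))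
      - 2 * x * h x + (l - m ^ 2 / (1 - x ^ 2)) * g x
      = (1 - x ^ 2) * g'' - 2 * (m + 1) * x * g' x + (l - m * (m + 1)) * g x := by
    simp only [h_def]
    field_simp
    ring
  linear_combination (1 - x ^ 2) ^ (m / 2) * (key.trans hode)

theorem ferrers_ode_general (m N : ℕ) (x : ℝ) (hx : x ∈ Set.Ioo (-1 : ℝ) 1) :
    (1 - x ^ 2) * deriv (deriv (ferrersP m N)) x - 2 * x * deriv (ferrersP m N) x +
      ((((N : ℝ) + 1 / 2) ^ 2 - 1 / 4 - (m : ℝ) ^ 2 / (1 - x ^ 2)) * ferrersP m N x) = 0 := by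
  set q : ℝ[X] := derivative^[N + m] ((X ^ 2 - 1) ^ N)
  set c : ℝ := √((((N : ℝ) + 1 / 2) * (N - m).factorial) / (N + m).factorial) *
    (1 / (2 ^ N * N.factorial))
  have hferrers : ferrersP m N = fun y => (1 - y ^ 2) ^ ((m : ℝ) / 2) * (c * q.eval y) := by
    have hpow : (fun y : ℝ => (y ^ 2 - 1) ^ N) = fun y => ((X ^ 2 - 1) ^ N : ℝ[X]).eval y := by
      simp
    funext y
    rw [ferrersP, hpow, iteratedDeriv_polynomial_eval]
    ring
  have hq := congrArg (eval x) (X_sq_sub_one_mul_iterate_derivative_pow N (N + m))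
  simp only [eval_mul, eval_add, eval_sub, eval_pow, eval_one, eval_C, eval_X] at hq
  rw [hferrers]
  refine associated_legendre_ode_of_one_sub_sq_rpow_mul (g' := fun y => c * (derivative q).eval y)
    (.of_forall fun y => (q.hasDerivAt y).const_mul c) (((derivative q).hasDerivAt x).const_mul c)
    (by nlinarith [hx.1, hx.2]) ?_
  push_cast at hq
  linear_combination (-c) * hq

/-- the normalized Legendre functions satisfy the associated Legendre ODE. -/
theorem ferrers_ode (m N : ℕ) (hmN : m ≤ N) (x : ℝ) (hx : x ∈ Set.Ioo (-1 : ℝ) 1) :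
    (1 - x ^ 2) * deriv (deriv (ferrersP m N)) x - 2 * x * deriv (ferrersP m N) x +
      ((((N : ℝ) + 1 / 2) ^ 2 - 1 / 4 - (m : ℝ) ^ 2 / (1 - x ^ 2)) * ferrersP m N x) = 0 :=
  ferrers_ode_general m N x hx
end

section
/- (Bohr–Sommerfeld action integral) For every c ∈ (0,1), 4c · ∫_0^{√(1−c²)} τ² / ((1−τ²)·√(1−c²−τ²)) dτ = 2π·(1−c). -/
open Real Filter MeasureTheory intervalIntegral

/-!
Substituting `τ = √(1 - c²) sin θ` removes the square-root singularity at the turning point and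
turns the integrand into `(cos² θ + c² sin² θ)⁻¹ - 1`. Up to the factor `c`, the first term is the
rate at which the polar angle of the ellipse point `(cos θ, c sin θ)` turns, so over a quarter
period it integrates to `π / (2c)`, and the action is `4c (π / (2c) - π / 2) = 2π (1 - c)`.
-/

/-- No integrability hypothesis is needed: for a monotone substitution both sides are integrable
or not together, and otherwise both vanish. -/
theorem integral_div_sqrt_sq_sub_sq {r : ℝ} (hr : 0 < r) (h : ℝ → ℝ) :
    ∫ τ in (0 : ℝ)..r, h τ / √(r ^ 2 - τ ^ 2) = ∫ θ in (0 : ℝ)..π / 2, h (r * sin θ) := by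
  have hπ : (0 : ℝ) ≤ π / 2 := by positivity
  have hsub := integral_comp_mul_deriv_of_deriv_nonneg (a := 0) (b := π / 2)
    (f := fun θ => r * sin θ) (f' := fun θ => r * cos θ) (g := fun τ => h τ / √(r ^ 2 - τ ^ 2))
    (by fun_prop) (fun θ _ => (hasDerivAt_sin θ).const_mul r)
    (fun θ hθ => by
      rw [min_eq_left hπ, max_eq_right hπ] at hθ
      exact mul_nonneg hr.le (cos_nonneg_of_mem_Icc ⟨by linarith [hθ.1, pi_pos], hθ.2.le⟩))
  simp only [sin_zero, mul_zero, sin_pi_div_two, mul_one] at hsub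
  rw [← hsub, integral_of_le hπ, integral_of_le hπ, integral_Ioc_eq_integral_Ioo,
    integral_Ioc_eq_integral_Ioo]
  refine setIntegral_congr_fun measurableSet_Ioo fun θ hθ => ?_
  have hcos : 0 < cos θ := cos_pos_of_mem_Ioo ⟨by linarith [hθ.1, pi_pos], hθ.2⟩
  have hsqrt : √(r ^ 2 - (r * sin θ) ^ 2) = r * cos θ := by
    rw [← sqrt_sq (by positivity : 0 ≤ r * cos θ)]
    congr 1
    linear_combination -r ^ 2 * sin_sq_add_cos_sq θ
  simp only [Function.comp_apply, hsqrt]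
  field_simp

/-- A continuous branch of the polar angle of `(a cos θ, b sin θ)`; on `(-π/2, π/2)` it equals
`arctan (b / a * tan θ)` by the subtraction formula for `arctan`. -/
noncomputable def ellipsePolarAngle (a b θ : ℝ) : ℝ :=
  θ + arctan ((b - a) * sin θ * cos θ / (a * cos θ ^ 2 + b * sin θ ^ 2))

section

variable {a b : ℝ}

lemma mul_cos_sq_add_mul_sin_sq_pos (ha : 0 < a) (hb : 0 < b) (θ : ℝ) :
    0 < a * cos θ ^ 2 + b * sin θ ^ 2 := by
  rcases eq_or_ne (sin θ) 0 with h | h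
  · have : cos θ ^ 2 = 1 := by nlinarith [sin_sq_add_cos_sq θ]
    simp [h, this, ha]
  · positivity

lemma hasDerivAt_ellipsePolarAngle (ha : 0 < a) (hb : 0 < b) (θ : ℝ) :
    HasDerivAt (ellipsePolarAngle a b) (a * b / (a ^ 2 * cos θ ^ 2 + b ^ 2 * sin θ ^ 2)) θ := by
  have hnum : HasDerivAt (fun x => (b - a) * sin x * cos x)
      ((b - a) * (cos θ ^ 2 - sin θ ^ 2)) θ :=
    (((hasDerivAt_sin θ).const_mul (b - a)).fun_mul (hasDerivAt_cos θ)).congr_deriv (by ring)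
  have hden : HasDerivAt (fun x => a * cos x ^ 2 + b * sin x ^ 2)
      (2 * (b - a) * sin θ * cos θ) θ :=
    ((((hasDerivAt_cos θ).pow 2).const_mul a).fun_add
      (((hasDerivAt_sin θ).pow 2).const_mul b)).congr_deriv (by simp only [Nat.cast_ofNat]; ring)
  have hD := mul_cos_sq_add_mul_sin_sq_pos ha hb θ
  refine ((hasDerivAt_id θ).fun_add (hnum.fun_div hden hD.ne').arctan).congr_deriv ?_
  have hE := mul_cos_sq_add_mul_sin_sq_pos (pow_pos ha 2) (pow_pos hb 2) θ
  set s := sin θ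
  set k := cos θ
  set D := a * k ^ 2 + b * s ^ 2
  set E := a ^ 2 * k ^ 2 + b ^ 2 * s ^ 2
  have hsk : s ^ 2 + k ^ 2 = 1 := sin_sq_add_cos_sq θ
  have h1 : 1 + ((b - a) * s * k / D) ^ 2 = E / D ^ 2 := by
    field_simp
    linear_combination E * hsk
  have h2 : (b - a) * (k ^ 2 - s ^ 2) * D - (b - a) * s * k * (2 * (b - a) * s * k) =
      a * b - E := by
    linear_combination (a * b * (s ^ 2 + k ^ 2 + 1) - E) * hsk
  rw [h1, h2]
  field_simp
  ring

theorem integral_mul_div_sq_mul_cos_sq_add_sq_mul_sin_sq (ha : 0 < a) (hb : 0 < b) :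
    ∫ θ in (0 : ℝ)..π / 2, a * b / (a ^ 2 * cos θ ^ 2 + b ^ 2 * sin θ ^ 2) = π / 2 := by
  have hcont : Continuous fun θ => a * b / (a ^ 2 * cos θ ^ 2 + b ^ 2 * sin θ ^ 2) :=
    continuous_const.div (by fun_prop) fun θ =>
      (mul_cos_sq_add_mul_sin_sq_pos (pow_pos ha 2) (pow_pos hb 2) θ).ne'
  rw [integral_eq_sub_of_hasDerivAt (fun θ _ => hasDerivAt_ellipsePolarAngle ha hb θ)
    (hcont.intervalIntegrable _ _)]
  simp [ellipsePolarAngle]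

theorem integral_inv_cos_sq_add_sq_mul_sin_sq (hb : 0 < b) :
    ∫ θ in (0 : ℝ)..π / 2, (cos θ ^ 2 + b ^ 2 * sin θ ^ 2)⁻¹ = π / (2 * b) := by
  have h := integral_mul_div_sq_mul_cos_sq_add_sq_mul_sin_sq one_pos hb
  simp only [one_mul, one_pow, div_eq_mul_inv b, intervalIntegral.integral_const_mul] at h
  rw [eq_div_iff (by positivity)]
  linarith

end

/-- the Bohr–Sommerfeld action integral. -/
theorem bohr_sommerfeld_action (c : ℝ) (hc : c ∈ Set.Ioo (0 : ℝ) 1) :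
    4 * c * ∫ τ in (0 : ℝ)..Real.sqrt (1 - c ^ 2),
        τ ^ 2 / ((1 - τ ^ 2) * Real.sqrt (1 - c ^ 2 - τ ^ 2))
      = 2 * π * (1 - c) := by
  obtain ⟨hc0, hc1⟩ := hc
  set r := √(1 - c ^ 2)
  have hr2 : r ^ 2 = 1 - c ^ 2 := sq_sqrt (by nlinarith)
  have hr : 0 < r := sqrt_pos.2 (by nlinarith)
  have hsub : ∫ τ in (0 : ℝ)..r, τ ^ 2 / ((1 - τ ^ 2) * √(1 - c ^ 2 - τ ^ 2)) =
      ∫ θ in (0 : ℝ)..π / 2, (r * sin θ) ^ 2 / (1 - (r * sin θ) ^ 2) := by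
    rw [← integral_div_sqrt_sq_sub_sq hr fun τ => τ ^ 2 / (1 - τ ^ 2)]
    refine integral_congr fun τ _ => ?_
    simp only [hr2, div_div]
  have hpos : ∀ θ, 0 < cos θ ^ 2 + c ^ 2 * sin θ ^ 2 := fun θ => by
    simpa using mul_cos_sq_add_mul_sin_sq_pos one_pos (pow_pos hc0 2) θ
  have hpartial : ∀ θ, (r * sin θ) ^ 2 / (1 - (r * sin θ) ^ 2) =
      (cos θ ^ 2 + c ^ 2 * sin θ ^ 2)⁻¹ - 1 := by
    intro θ
    rw [show 1 - (r * sin θ) ^ 2 = cos θ ^ 2 + c ^ 2 * sin θ ^ 2 by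
        linear_combination (-sin θ ^ 2) * hr2 - sin_sq_add_cos_sq θ,
      div_eq_iff (hpos θ).ne', sub_mul, inv_mul_cancel₀ (hpos θ).ne']
    linear_combination sin θ ^ 2 * hr2 + sin_sq_add_cos_sq θ
  have hcont : Continuous fun θ => (cos θ ^ 2 + c ^ 2 * sin θ ^ 2)⁻¹ :=
    (by fun_prop : Continuous fun θ => cos θ ^ 2 + c ^ 2 * sin θ ^ 2).inv₀ fun θ => (hpos θ).ne'
  rw [hsub, integral_congr fun θ _ => hpartial θ,
    integral_sub (hcont.intervalIntegrable _ _) intervalIntegrable_const,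
    integral_inv_cos_sq_add_sq_mul_sin_sq hc0, intervalIntegral.integral_const, smul_eq_mul]
  field_simp
  ring
end

section
/- Let 0 < c < 1. Define φ : ℝ → (0,π) by φ(t) = arccos(√(1−c²)·cos(2t)) and τ : ℝ → ℝ by τ(t) = √(1−c²)·sin(2t)/sin(φ(t)). Then for all t ∈ ℝ: (i) τ(t)² + c²/sin²(φ(t)) = 1; (ii) φ'(t) = 2·τ(t); (iii) τ'(t) = 2c²·cos(φ(t))/sin³(φ(t)); and (iv) φ(t+π) = φ(t) and τ(t+π) = τ(t), so the trajectory is periodic with period π. -/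
open Real Filter MeasureTheory intervalIntegral

/-!
With `a = √(1 - c²)` the angle is `φ = arccos (a cos 2t)`, so `cos φ = a cos 2t` and
`sin² φ = 1 - a² cos² 2t = c² + a² sin² 2t`; dividing by `sin² φ` gives the energy identity.
The chain rule for `arccos` gives `φ' = 2τ`, and then, using `cos φ = a cos 2t` once more,
`τ' = 2 cos φ (sin² φ - a² sin² 2t) / sin³ φ = 2 c² cos φ / sin³ φ`.
Periodicity is inherited from `cos 2t` and `sin 2t`.
-/

section

noncomputable def trajectoryAngle (a t : ℝ) : ℝ := arccos (a * cos (2 * t))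

noncomputable def trajectoryMomentum (a t : ℝ) : ℝ := a * sin (2 * t) / sin (trajectoryAngle a t)

variable {a : ℝ}

theorem abs_mul_cos_lt_one (ha : |a| < 1) (x : ℝ) : |a * cos x| < 1 := by
  rw [abs_mul]
  exact lt_of_le_of_lt (mul_le_of_le_one_right (abs_nonneg a) (abs_cos_le_one x)) ha

theorem cos_trajectoryAngle (ha : |a| < 1) (t : ℝ) :
    cos (trajectoryAngle a t) = a * cos (2 * t) := by
  obtain ⟨h₁, h₂⟩ := abs_lt.mp (abs_mul_cos_lt_one ha (2 * t))
  exact cos_arccos h₁.le h₂.le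

theorem trajectoryAngle_mem_Ioo (ha : |a| < 1) (t : ℝ) :
    trajectoryAngle a t ∈ Set.Ioo 0 π := by
  obtain ⟨h₁, h₂⟩ := abs_lt.mp (abs_mul_cos_lt_one ha (2 * t))
  exact ⟨arccos_pos.mpr h₂, arccos_lt_pi.mpr h₁⟩

theorem sin_trajectoryAngle_pos (ha : |a| < 1) (t : ℝ) : 0 < sin (trajectoryAngle a t) :=
  sin_pos_of_mem_Ioo (trajectoryAngle_mem_Ioo ha t)

theorem sin_trajectoryAngle_sq (ha : |a| < 1) (t : ℝ) :
    sin (trajectoryAngle a t) ^ 2 = (1 - a ^ 2) + a ^ 2 * sin (2 * t) ^ 2 := by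
  rw [sin_sq, cos_trajectoryAngle ha]
  linear_combination -a ^ 2 * sin_sq_add_cos_sq (2 * t)

theorem trajectoryMomentum_sq_add_div_sin_sq (ha : |a| < 1) (t : ℝ) :
    trajectoryMomentum a t ^ 2 + (1 - a ^ 2) / sin (trajectoryAngle a t) ^ 2 = 1 := by
  have hs := (sin_trajectoryAngle_pos ha t).ne'
  rw [trajectoryMomentum, div_pow, ← add_div, div_eq_one_iff_eq (pow_ne_zero 2 hs),
    sin_trajectoryAngle_sq ha]
  ring

theorem hasDerivAt_trajectoryAngle (ha : |a| < 1) (t : ℝ) :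
    HasDerivAt (trajectoryAngle a) (2 * trajectoryMomentum a t) t := by
  obtain ⟨h₁, h₂⟩ := abs_lt.mp (abs_mul_cos_lt_one ha (2 * t))
  have hu : HasDerivAt (fun x => a * cos (2 * x)) (a * (-sin (2 * t) * 2)) t :=
    (((hasDerivAt_id t).const_mul 2).cos.const_mul a).congr_deriv (by simp)
  refine ((hasDerivAt_arccos h₁.ne' h₂.ne).comp t hu).congr_deriv ?_
  rw [trajectoryMomentum, trajectoryAngle, sin_arccos]
  ring

theorem hasDerivAt_trajectoryMomentum (ha : |a| < 1) (t : ℝ) :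
    HasDerivAt (trajectoryMomentum a)
      (2 * (1 - a ^ 2) * cos (trajectoryAngle a t) / sin (trajectoryAngle a t) ^ 3) t := by
  have hs := (sin_trajectoryAngle_pos ha t).ne'
  have hnum : HasDerivAt (fun x => a * sin (2 * x)) (a * (cos (2 * t) * 2)) t :=
    (((hasDerivAt_id t).const_mul 2).sin.const_mul a).congr_deriv (by simp)
  refine (hnum.div (hasDerivAt_trajectoryAngle ha t).sin hs).congr_deriv ?_
  rw [trajectoryMomentum, cos_trajectoryAngle ha]
  field_simp
  linear_combination a * cos (2 * t) * sin_trajectoryAngle_sq ha t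

theorem trajectoryAngle_periodic : Function.Periodic (trajectoryAngle a) π := fun t => by
  rw [trajectoryAngle, trajectoryAngle, mul_add, cos_add_two_pi]

theorem trajectoryMomentum_periodic : Function.Periodic (trajectoryMomentum a) π := fun t => by
  rw [trajectoryMomentum, trajectoryMomentum, trajectoryAngle_periodic, mul_add, sin_add_two_pi]

end

/-- the Hamiltonian trajectory on the energy curve and its `π`-periodicity. -/
theorem hamiltonian_trajectory (c : ℝ) (hc : c ∈ Set.Ioo (0 : ℝ) 1)
    (φ τ : ℝ → ℝ)
    (hφ : ∀ t, φ t = Real.arccos (Real.sqrt (1 - c ^ 2) * Real.cos (2 * t)))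
    (hτ : ∀ t, τ t = Real.sqrt (1 - c ^ 2) * Real.sin (2 * t) / Real.sin (φ t)) :
    ∀ t : ℝ,
      φ t ∈ Set.Ioo 0 π ∧
      (τ t) ^ 2 + c ^ 2 / (Real.sin (φ t)) ^ 2 = 1 ∧
      deriv φ t = 2 * τ t ∧
      deriv τ t = 2 * c ^ 2 * Real.cos (φ t) / (Real.sin (φ t)) ^ 3 ∧
      φ (t + π) = φ t ∧ τ (t + π) = τ t := by
  obtain ⟨hc₀, hc₁⟩ := hc
  set a := √(1 - c ^ 2)
  have hc₂ : 1 - a ^ 2 = c ^ 2 := by rw [sq_sqrt (by nlinarith)]; ring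
  have ha : |a| < 1 := (sq_lt_one_iff_abs_lt_one a).mp (by nlinarith)
  obtain rfl : φ = trajectoryAngle a := funext hφ
  obtain rfl : τ = trajectoryMomentum a := funext hτ
  intro t
  rw [← hc₂]
  exact ⟨trajectoryAngle_mem_Ioo ha t, trajectoryMomentum_sq_add_div_sin_sq ha t,
    (hasDerivAt_trajectoryAngle ha t).deriv, (hasDerivAt_trajectoryMomentum ha t).deriv,
    trajectoryAngle_periodic t, trajectoryMomentum_periodic t⟩
end
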